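/- Let G be a finite simple graph and (H, f) a valued cover of G. If (H, f) is a minimal non-strictly-f-degenerate pair, then G is connected and f(v,1) + f(v,2) + ⋯ + f(v,κ) ≤ deg_G(v) for every vertex v ∈ V(G). -/

import Mathlib

open SimpleGraph

universe u

/-- `H` is a cover of `G` with `κ` parts: every edge of `H` joins distinct fibres
`X_u`, `X_v` with `uv ∈ E(G)` (in particular each fibre is independent), and the
edges between two fibres form a (possibly empty) matching. -/
def IsCover {V : Type u} (κ : ℕ) (G : SimpleGraph V) (H : SimpleGraph (V × Fin κ)) : Prop :=
  (∀ (u v : V) (p q : Fin κ), H.Adj (u, p) (v, q) → G.Adj u v) ∧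
  (∀ (u v : V) (p q q' : Fin κ), H.Adj (u, p) (v, q) → H.Adj (u, p) (v, q') → q = q')

/-- The subgraph of `Γ` induced on `R` is strictly `f`-degenerate: every nonempty
subgraph with vertices inside `R` has a vertex whose degree there is `< f`. -/
def StrictlyFDegenerateOn {α : Type u} (Γ : SimpleGraph α) (f : α → ℕ) (R : Set α) : Prop :=
  ∀ S : Set α, S ⊆ R → S.Nonempty → ∃ x ∈ S, (S ∩ {y | Γ.Adj x y}).ncard < f x

/-- `R` is a transversal of a cover with fibres `X_v = {v} × Fin κ`. -/
def IsTransversal {V : Type u} {κ : ℕ} (R : Set (V × Fin κ)) : Prop :=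
  ∀ v : V, ∃! p : Fin κ, (v, p) ∈ R

/-- `H` has a strictly `f`-degenerate transversal. -/
def HasSFDTransversal {V : Type u} {κ : ℕ} (H : SimpleGraph (V × Fin κ))
    (f : V × Fin κ → ℕ) : Prop :=
  ∃ R : Set (V × Fin κ), IsTransversal R ∧ StrictlyFDegenerateOn H f R

/-- `(H, f)` is a minimal non-strictly-`f`-degenerate pair: `H` has no strictly
`f`-degenerate transversal, but for each `v` the cover `H − X_v` of `G − v`
has one. -/
def MinimalNonSFD {V : Type u} (κ : ℕ) (H : SimpleGraph (V × Fin κ))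
    (f : V × Fin κ → ℕ) : Prop :=
  ¬ HasSFDTransversal H f ∧
  ∀ v : V, ∃ R : Set (V × Fin κ), (∀ x ∈ R, x.1 ≠ v) ∧
    (∀ u : V, u ≠ v → ∃! p : Fin κ, (u, p) ∈ R) ∧ StrictlyFDegenerateOn H f R

/-! A transversal of `H − X_v` that stays strictly `f`-degenerate can be extended to all of `H`
by any point `(v, q)` having fewer than `f (v, q)` neighbours in it; by minimality no such `q`
exists, and the matching structure of the cover turns this into `∑ q f(v,q) ≤ deg_G v`.
If `G` were disconnected, with `a` and `b` in different components, the transversal avoiding `b`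
on the component of `a` and the one avoiding `a` elsewhere glue to a strictly `f`-degenerate
transversal of `H`, since no edge of `H` joins the two parts. -/

section Degenerate

variable {α : Type u} {Γ : SimpleGraph α} {f : α → ℕ}

theorem StrictlyFDegenerateOn.mono {R R' : Set α} (hR : StrictlyFDegenerateOn Γ f R)
    (h : R' ⊆ R) : StrictlyFDegenerateOn Γ f R' :=
  fun S hS hne => hR S (hS.trans h) hne

theorem StrictlyFDegenerateOn.insert [Finite α] {R : Set α} {x : α}
    (hR : StrictlyFDegenerateOn Γ f R) (hx : (R ∩ Γ.neighborSet x).ncard < f x) :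
    StrictlyFDegenerateOn Γ f (insert x R) := by
  intro S hS hne
  by_cases hxS : x ∈ S
  · refine ⟨x, hxS, lt_of_le_of_lt (Set.ncard_le_ncard ?_) hx⟩
    rintro y ⟨hyS, hxy⟩
    rcases hS hyS with rfl | hyR
    · exact absurd hxy (Γ.irrefl)
    · exact ⟨hyR, hxy⟩
  · exact hR S (fun y hy => (hS hy).resolve_left (fun h => hxS (h ▸ hy))) hne

theorem StrictlyFDegenerateOn.union {A B : Set α} (hA : StrictlyFDegenerateOn Γ f A)
    (hB : StrictlyFDegenerateOn Γ f B) (hAB : ∀ x ∈ A, ∀ y ∈ B, ¬ Γ.Adj x y) :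
    StrictlyFDegenerateOn Γ f (A ∪ B) := by
  intro S hS hne
  by_cases hSA : (S ∩ A).Nonempty
  · obtain ⟨x, ⟨hxS, hxA⟩, hx⟩ := hA (S ∩ A) Set.inter_subset_right hSA
    refine ⟨x, hxS, ?_⟩
    have hnbr : S ∩ {y | Γ.Adj x y} = S ∩ A ∩ {y | Γ.Adj x y} := by
      ext y
      refine ⟨fun ⟨hyS, hxy⟩ => ⟨⟨hyS, ?_⟩, hxy⟩, fun ⟨⟨hyS, _⟩, hxy⟩ => ⟨hyS, hxy⟩⟩
      exact (hS hyS).resolve_right (fun hyB => hAB x hxA y hyB hxy)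
    rwa [hnbr]
  · exact hB S (fun y hy => (hS hy).resolve_left (fun hyA => hSA ⟨y, hy, hyA⟩)) hne

end Degenerate

section Transversal

variable {V : Type u} {κ : ℕ}

theorem injOn_fst_of_existsUnique_snd {R : Set (V × Fin κ)}
    (hR : ∀ x ∈ R, ∃! p : Fin κ, (x.1, p) ∈ R) : Set.InjOn Prod.fst R := by
  rintro ⟨u, p⟩ hp ⟨u', p'⟩ hp' (rfl : u = u')
  exact Prod.ext rfl ((hR _ hp).unique hp hp')

theorem isTransversal_insert {R : Set (V × Fin κ)} {v : V} (q : Fin κ)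
    (hv : ∀ x ∈ R, x.1 ≠ v) (hR : ∀ u, u ≠ v → ∃! p : Fin κ, (u, p) ∈ R) :
    IsTransversal (insert (v, q) R) := by
  intro u
  by_cases hu : u = v
  · subst hu
    refine ⟨q, Set.mem_insert _ _, fun p hp => ?_⟩
    rcases hp with hp | hp
    · exact (Prod.ext_iff.mp hp).2
    · exact absurd rfl (hv _ hp)
  · obtain ⟨p, hp, huniq⟩ := hR u hu
    refine ⟨p, Set.mem_insert_of_mem _ hp, fun p' hp' => ?_⟩
    rcases hp' with hp' | hp'
    · exact absurd (Prod.ext_iff.mp hp').1 hu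
    · exact huniq p' hp'

theorem isTransversal_sep_union_sep {R₁ R₂ : Set (V × Fin κ)} {C : Set V}
    (h₁ : ∀ u ∈ C, ∃! p : Fin κ, (u, p) ∈ R₁) (h₂ : ∀ u ∉ C, ∃! p : Fin κ, (u, p) ∈ R₂) :
    IsTransversal ({x ∈ R₁ | x.1 ∈ C} ∪ {x ∈ R₂ | x.1 ∉ C}) := by
  intro u
  by_cases hu : u ∈ C
  · obtain ⟨p, hp, huniq⟩ := h₁ u hu
    refine ⟨p, Or.inl ⟨hp, hu⟩, ?_⟩
    rintro p' (h | h)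
    · exact huniq p' h.1
    · exact absurd hu h.2
  · obtain ⟨p, hp, huniq⟩ := h₂ u hu
    refine ⟨p, Or.inr ⟨hp, hu⟩, ?_⟩
    rintro p' (h | h)
    · exact absurd h.2 hu
    · exact huniq p' h.1

theorem hasSFDTransversal_of_isEmpty [IsEmpty V] (H : SimpleGraph (V × Fin κ))
    (f : V × Fin κ → ℕ) : HasSFDTransversal H f :=
  ⟨∅, isEmptyElim, fun _ hS hne => absurd (Set.subset_empty_iff.mp hS) hne.ne_empty⟩

end Transversal

section Cover

variable {V : Type u} {κ : ℕ} {G : SimpleGraph V} {H : SimpleGraph (V × Fin κ)}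

theorem IsCover.sum_ncard_inter_neighborSet_le [Finite V] (hH : IsCover κ G H)
    {R : Set (V × Fin κ)} (hR : Set.InjOn Prod.fst R) (v : V) :
    ∑ q : Fin κ, (R ∩ H.neighborSet (v, q)).ncard ≤ (G.neighborSet v).ncard := by
  have hdisj : Pairwise fun q q' : Fin κ =>
      Disjoint (R ∩ H.neighborSet (v, q)) (R ∩ H.neighborSet (v, q')) := by
    intro q q' hqq'
    refine Set.disjoint_left.mpr fun x ⟨_, hq⟩ ⟨_, hq'⟩ => hqq' ?_
    exact hH.2 x.1 v x.2 q q' hq.symm hq'.symm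
  calc ∑ q : Fin κ, (R ∩ H.neighborSet (v, q)).ncard
      = (⋃ q, R ∩ H.neighborSet (v, q)).ncard := by
        rw [Set.ncard_iUnion_of_finite (fun _ => Set.toFinite _) hdisj,
          finsum_eq_sum_of_fintype]
    _ ≤ (G.neighborSet v).ncard := by
        refine Set.ncard_le_ncard_of_injOn Prod.fst ?_ (hR.mono ?_)
        · intro x hx
          obtain ⟨q, -, hx⟩ := Set.mem_iUnion.mp hx
          exact hH.1 v x.1 q x.2 hx
        · exact Set.iUnion_subset fun q => Set.inter_subset_left

end Cover

namespace MinimalNonSFD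

variable {V : Type u} {κ : ℕ} {G : SimpleGraph V} {H : SimpleGraph (V × Fin κ)}
  {f : V × Fin κ → ℕ}

theorem sum_le_degree [Finite V] (hH : IsCover κ G H) (hmin : MinimalNonSFD κ H f) (v : V) :
    ∑ q : Fin κ, f (v, q) ≤ (G.neighborSet v).ncard := by
  obtain ⟨R, hv, hR, hRdeg⟩ := hmin.2 v
  by_contra! hlt
  have hinj : Set.InjOn Prod.fst R := injOn_fst_of_existsUnique_snd fun x hx => hR x.1 (hv x hx)
  obtain ⟨q, -, hq⟩ := Finset.exists_lt_of_sum_lt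
    ((hH.sum_ncard_inter_neighborSet_le hinj v).trans_lt hlt)
  exact hmin.1 ⟨insert (v, q) R, isTransversal_insert q hv hR, hRdeg.insert hq⟩

theorem preconnected (hH : IsCover κ G H) (hmin : MinimalNonSFD κ H f) : G.Preconnected := by
  intro a b
  by_contra hab
  obtain ⟨Rb, -, hRb, hRb_deg⟩ := hmin.2 b
  obtain ⟨Ra, -, hRa, hRa_deg⟩ := hmin.2 a
  let C : Set V := {u | G.Reachable a u}
  refine hmin.1 ⟨{x ∈ Rb | x.1 ∈ C} ∪ {x ∈ Ra | x.1 ∉ C}, ?_, ?_⟩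
  · exact isTransversal_sep_union_sep (fun u hu => hRb u fun hub => hab (hub ▸ hu))
      (fun u hu => hRa u fun hua => hu (hua ▸ Reachable.refl a))
  · refine (hRb_deg.mono fun _ hx => hx.1).union (hRa_deg.mono fun _ hx => hx.1) ?_
    intro x hx y hy hxy
    exact hy.2 (hx.2.trans (hH.1 x.1 y.1 x.2 y.2 hxy).reachable)

theorem nonempty (hmin : MinimalNonSFD κ H f) : Nonempty V :=
  not_isEmpty_iff.mp fun _ => hmin.1 (hasSFDTransversal_of_isEmpty H f)

end MinimalNonSFD

/-- If `(H, f)` is a minimal non-strictly-`f`-degenerate pair,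
then `G` is connected and `∑ q f(v,q) ≤ deg_G v` for every vertex `v`. -/
theorem minimalNonSFD_connected_and_sum_le_degree
    {V : Type} [Fintype V] (G : SimpleGraph V) (κ : ℕ)
    (H : SimpleGraph (V × Fin κ)) (hH : IsCover κ G H) (f : V × Fin κ → ℕ)
    (hmin : MinimalNonSFD κ H f) :
    G.Connected ∧ ∀ v : V, ∑ q : Fin κ, f (v, q) ≤ (G.neighborSet v).ncard :=
  ⟨(connected_iff G).mpr ⟨hmin.preconnected hH, hmin.nonempty⟩, hmin.sum_le_degree hH⟩
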